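/- Let σ be the componentwise ReLU activation on ℝ^k, i.e., σ(x)_j = max{0, x_j}. Let W_1, W_2, Q_1, Q_2 ∈ ℝ^{k × k}, set λ ≥ max{‖W_1‖, ‖W_2‖}, and define the residual block z(x) = W_2 σ(W_1 x) + x and its quantized version z_Q(x) = Q_2 σ(Q_1 x) + x. Then for all y, y' ∈ ℝ^k, ‖z(σ(y)) − z_Q(σ(y'))‖ ≤ ( λ ‖W_1 − Q_1‖ + ‖W_2 − Q_2‖ ‖Q_1‖ ) ‖y‖ + ( ‖Q_2‖ ‖Q_1‖ + 1 ) ‖y − y'‖, where ‖·‖ denotes the matrix 2-norm for matrices and the Euclidean norm for vectors. -/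

import Mathlib

open scoped RealInnerProductSpace BigOperators

/-- The matrix 2-norm (operator norm w.r.t. Euclidean norms), i.e. the largest
singular value. -/
noncomputable def opNorm {m n : ℕ} (A : Matrix (Fin m) (Fin n) ℝ) : ℝ :=
  ‖LinearMap.toContinuousLinearMap (Matrix.toEuclideanLin A)‖

/-- The `j`-th column of a matrix, viewed as a vector of `ℝ^m` with the Euclidean norm. -/
noncomputable def matCol {m n : ℕ} (A : Matrix (Fin m) (Fin n) ℝ) (j : Fin n) :
    EuclideanSpace ℝ (Fin m) :=
  WithLp.toLp 2 (fun i => A i j)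

/-- Frame variation `σ(F,p)` of the ordered family `v = e ∘ p`:
`∑_{i=1}^{N-1} ‖v i - v (i+1)‖`. -/
noncomputable def frameVar {E : Type*} [NormedAddCommGroup E] :
    {N : ℕ} → (Fin N → E) → ℝ
  | 0, _ => 0
  | n + 1, v => ∑ i : Fin n, ‖v i.castSucc - v i.succ‖

/-- The midrise quantization alphabet `A^δ_K`. -/
def midrise (δ : ℝ) (K : ℕ) : Set ℝ :=
  {a | ∃ j : Fin (2 * K), a = (-(K : ℝ) + 1 / 2 + (j : ℕ)) * δ}

/-- Componentwise application of a scalar function to a Euclidean vector. -/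
noncomputable def cwMap (σ : ℝ → ℝ) {d : ℕ} (v : EuclideanSpace ℝ (Fin d)) :
    EuclideanSpace ℝ (Fin d) :=
  WithLp.toLp 2 (fun j => σ (v j))

/-- `layerSeq σ m W X i` is the activated output after `i` layers:
`z_0 = X`, `z_{i+1} = σ.(W_i z_i)`. -/
noncomputable def layerSeq (σ : ℝ → ℝ) (m : ℕ → ℕ)
    (W : (i : ℕ) → Matrix (Fin (m (i + 1))) (Fin (m i)) ℝ)
    (X : EuclideanSpace ℝ (Fin (m 0))) : (i : ℕ) → EuclideanSpace ℝ (Fin (m i))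
  | 0 => X
  | i + 1 => cwMap σ (Matrix.toEuclideanLin (W i) (layerSeq σ m W X i))

/-- The `n`-layer feed-forward network `W_n σ(W_{n-1} σ(⋯ σ(W_1 X)⋯))`
(no activation after the last layer, no biases). -/
noncomputable def net (σ : ℝ → ℝ) (m : ℕ → ℕ)
    (W : (i : ℕ) → Matrix (Fin (m (i + 1))) (Fin (m i)) ℝ)
    (n : ℕ) (X : EuclideanSpace ℝ (Fin (m 0))) : EuclideanSpace ℝ (Fin (m n)) :=
  match n with
  | 0 => X
  | k + 1 => Matrix.toEuclideanLin (W k) (layerSeq σ m W X k)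

/-- Componentwise ReLU. -/
noncomputable def relu {d : ℕ} (v : EuclideanSpace ℝ (Fin d)) : EuclideanSpace ℝ (Fin d) :=
  cwMap (fun t => max 0 t) v

/-- A residual block `z(x) = W₂ σ(W₁ x) + x` with ReLU activation `σ`. -/
noncomputable def resBlock {k : ℕ} (W1 W2 : Matrix (Fin k) (Fin k) ℝ)
    (x : EuclideanSpace ℝ (Fin k)) : EuclideanSpace ℝ (Fin k) :=
  Matrix.toEuclideanLin W2 (relu (Matrix.toEuclideanLin W1 x)) + x

/-- Partial compositions of a residual network:
`y_0 = X`, `y_i = z^{[i]} ∘ σ ∘ ⋯ ∘ σ ∘ z^{[1]} (X)`, where block `i` (1-based)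
uses matrices `W1 (i-1)`, `W2 (i-1)`. -/
noncomputable def resPartial {k : ℕ} (W1 W2 : ℕ → Matrix (Fin k) (Fin k) ℝ)
    (X : EuclideanSpace ℝ (Fin k)) : ℕ → EuclideanSpace ℝ (Fin k)
  | 0 => X
  | 1 => resBlock (W1 0) (W2 0) X
  | i + 2 => resBlock (W1 (i + 1)) (W2 (i + 1)) (relu (resPartial W1 W2 X (i + 1)))



lemma opNorm_nonneg' {m n : ℕ} (A : Matrix (Fin m) (Fin n) ℝ) : 0 ≤ opNorm A :=
  norm_nonneg _

lemma apply_le_opNorm {m n : ℕ} (A : Matrix (Fin m) (Fin n) ℝ)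
    (v : EuclideanSpace ℝ (Fin n)) :
    ‖Matrix.toEuclideanLin A v‖ ≤ opNorm A * ‖v‖ :=
  (LinearMap.toContinuousLinearMap (Matrix.toEuclideanLin A)).le_opNorm v

lemma relu_lipschitz {d : ℕ} (a b : EuclideanSpace ℝ (Fin d)) :
    ‖relu a - relu b‖ ≤ ‖a - b‖ := by
  rw [EuclideanSpace.norm_eq, EuclideanSpace.norm_eq]
  apply Real.sqrt_le_sqrt
  apply Finset.sum_le_sum
  intro i _
  have h : |max 0 (a i) - max 0 (b i)| ≤ |a i - b i| := by
    rw [max_comm 0 (a i), max_comm 0 (b i)]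
    exact abs_max_sub_max_le_abs _ _ _
  have e1 : ((relu a - relu b) i) = max 0 (a i) - max 0 (b i) := rfl
  have e2 : ((a - b) i) = a i - b i := rfl
  rw [e1, e2, Real.norm_eq_abs, Real.norm_eq_abs]
  exact pow_le_pow_left₀ (abs_nonneg _) h 2

lemma relu_norm_le {d : ℕ} (a : EuclideanSpace ℝ (Fin d)) : ‖relu a‖ ≤ ‖a‖ := by
  have h0 : relu (0 : EuclideanSpace ℝ (Fin d)) = 0 := by
    ext i
    simp [relu, cwMap]
  have := relu_lipschitz a 0
  simpa [h0] using this

/-- the one-block estimate (12) in the proof of Theorem 6.3,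
for a residual block `z(x) = W₂ σ(W₁ x) + x` with componentwise ReLU `σ`. -/
theorem stmt12 {k : ℕ} (W1 W2 Q1 Q2 : Matrix (Fin k) (Fin k) ℝ) (lam : ℝ)
    (hlam : max (opNorm W1) (opNorm W2) ≤ lam)
    (y y' : EuclideanSpace ℝ (Fin k)) :
    ‖resBlock W1 W2 (relu y) - resBlock Q1 Q2 (relu y')‖ ≤
      (lam * opNorm (W1 - Q1) + opNorm (W2 - Q2) * opNorm Q1) * ‖y‖ +
        (opNorm Q2 * opNorm Q1 + 1) * ‖y - y'‖ := by
  set x := relu y with hx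
  set x' := relu y' with hx'
  have hxy : ‖x‖ ≤ ‖y‖ := relu_norm_le y
  have hxx' : ‖x - x'‖ ≤ ‖y - y'‖ := relu_lipschitz y y'
  have hW2 : opNorm W2 ≤ lam := le_trans (le_max_right _ _) hlam
  set u := relu (Matrix.toEuclideanLin W1 x) with hu
  set v := relu (Matrix.toEuclideanLin Q1 x) with hv
  set w := relu (Matrix.toEuclideanLin Q1 x') with hw
  have hmdiff : Matrix.toEuclideanLin (W2 - Q2) v
      = Matrix.toEuclideanLin W2 v - Matrix.toEuclideanLin Q2 v := by
    rw [map_sub]; rfl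
  have hsplit : resBlock W1 W2 x - resBlock Q1 Q2 x' =
      (Matrix.toEuclideanLin W2 (u - v))
      + (Matrix.toEuclideanLin (W2 - Q2) v)
      + (Matrix.toEuclideanLin Q2 (v - w))
      + (x - x') := by
    rw [hmdiff, map_sub, map_sub]
    simp only [resBlock, ← hu, ← hw]
    abel
  -- nonnegativity facts
  have n0 : (0:ℝ) ≤ opNorm Q1 := opNorm_nonneg' _
  have n1 : (0:ℝ) ≤ opNorm Q2 := opNorm_nonneg' _
  have n2 : (0:ℝ) ≤ opNorm (W1 - Q1) := opNorm_nonneg' _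
  have n3 : (0:ℝ) ≤ opNorm (W2 - Q2) := opNorm_nonneg' _
  have nlam : (0:ℝ) ≤ lam := le_trans (opNorm_nonneg' W2) hW2
  have ny : (0:ℝ) ≤ ‖y‖ := norm_nonneg _
  have nyy : (0:ℝ) ≤ ‖y - y'‖ := norm_nonneg _
  -- term 1
  have huv : ‖u - v‖ ≤ opNorm (W1 - Q1) * ‖y‖ := by
    calc ‖u - v‖ ≤ ‖Matrix.toEuclideanLin W1 x - Matrix.toEuclideanLin Q1 x‖ :=
          relu_lipschitz _ _
      _ = ‖Matrix.toEuclideanLin (W1 - Q1) x‖ := by rw [map_sub]; rfl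
      _ ≤ opNorm (W1 - Q1) * ‖x‖ := apply_le_opNorm _ _
      _ ≤ opNorm (W1 - Q1) * ‖y‖ := by exact mul_le_mul_of_nonneg_left hxy n2
  have t1 : ‖Matrix.toEuclideanLin W2 (u - v)‖ ≤ lam * opNorm (W1 - Q1) * ‖y‖ := by
    calc ‖Matrix.toEuclideanLin W2 (u - v)‖ ≤ opNorm W2 * ‖u - v‖ := apply_le_opNorm _ _
      _ ≤ lam * (opNorm (W1 - Q1) * ‖y‖) := by
          apply mul_le_mul hW2 huv (norm_nonneg _) nlam
      _ = lam * opNorm (W1 - Q1) * ‖y‖ := by ring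
  -- term 2
  have hvn : ‖v‖ ≤ opNorm Q1 * ‖y‖ := by
    calc ‖v‖ ≤ ‖Matrix.toEuclideanLin Q1 x‖ := relu_norm_le _
      _ ≤ opNorm Q1 * ‖x‖ := apply_le_opNorm _ _
      _ ≤ opNorm Q1 * ‖y‖ := mul_le_mul_of_nonneg_left hxy n0
  have t2 : ‖Matrix.toEuclideanLin (W2 - Q2) v‖
      ≤ opNorm (W2 - Q2) * opNorm Q1 * ‖y‖ := by
    calc ‖Matrix.toEuclideanLin (W2 - Q2) v‖ ≤ opNorm (W2 - Q2) * ‖v‖ :=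
          apply_le_opNorm _ _
      _ ≤ opNorm (W2 - Q2) * (opNorm Q1 * ‖y‖) := mul_le_mul_of_nonneg_left hvn n3
      _ = opNorm (W2 - Q2) * opNorm Q1 * ‖y‖ := by ring
  -- term 3
  have hvw : ‖v - w‖ ≤ opNorm Q1 * ‖y - y'‖ := by
    calc ‖v - w‖ ≤ ‖Matrix.toEuclideanLin Q1 x - Matrix.toEuclideanLin Q1 x'‖ :=
          relu_lipschitz _ _
      _ = ‖Matrix.toEuclideanLin Q1 (x - x')‖ := by rw [map_sub]
      _ ≤ opNorm Q1 * ‖x - x'‖ := apply_le_opNorm _ _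
      _ ≤ opNorm Q1 * ‖y - y'‖ := mul_le_mul_of_nonneg_left hxx' n0
  have t3 : ‖Matrix.toEuclideanLin Q2 (v - w)‖
      ≤ opNorm Q2 * opNorm Q1 * ‖y - y'‖ := by
    calc ‖Matrix.toEuclideanLin Q2 (v - w)‖ ≤ opNorm Q2 * ‖v - w‖ := apply_le_opNorm _ _
      _ ≤ opNorm Q2 * (opNorm Q1 * ‖y - y'‖) := mul_le_mul_of_nonneg_left hvw n1
      _ = opNorm Q2 * opNorm Q1 * ‖y - y'‖ := by ring
  rw [hsplit]
  calc ‖Matrix.toEuclideanLin W2 (u - v) + Matrix.toEuclideanLin (W2 - Q2) v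
        + Matrix.toEuclideanLin Q2 (v - w) + (x - x')‖
      ≤ ‖Matrix.toEuclideanLin W2 (u - v)‖ + ‖Matrix.toEuclideanLin (W2 - Q2) v‖
        + ‖Matrix.toEuclideanLin Q2 (v - w)‖ + ‖x - x'‖ := by
        exact le_trans (norm_add_le _ _) (add_le_add_left (le_trans (norm_add_le _ _) (add_le_add_left (norm_add_le _ _) _)) _)
    _ ≤ (lam * opNorm (W1 - Q1) + opNorm (W2 - Q2) * opNorm Q1) * ‖y‖ +
        (opNorm Q2 * opNorm Q1 + 1) * ‖y - y'‖ := by nlinarith [t1, t2, t3, hxx']
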